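/- For every s ≥ 0, with ψ2(t) = !![1,t;0,1] and ψ3(t) = !![1,i·t;0,1], setting W₁ = ψ2(−√s), W₂ = W₁·ψ3(−√s), W₃ = W₂·ψ2(√s), the exact identity Ω_0(W₁, ψ3(−√s)) + Ω_0(W₂, ψ2(√s)) + Ω_0(W₃, ψ3(√s)) = 2s holds. (This shows that in the contracted case y = 0 the central component of the group commutator is exactly 2s, so the central extension of e(2) by ℝ is nontrivial.) -/
import Mathlib


open Complex Matrix

noncomputable section

abbrev M2 : Type := Matrix (Fin 2) (Fin 2) ℂ

/-- `ψ2(t) = !![1,t;0,1]`. -/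
def psi2 (t : ℝ) : M2 := !![1, (t : ℂ); 0, 1]

/-- `ψ3(t) = !![1,it;0,1]`. -/
def psi3 (t : ℝ) : M2 := !![1, Complex.I * (t : ℂ); 0, 1]

/-- `Ω_0(g,h) = Im(−b(g)·conj(b(h)) / (a(g)·a(h)))`. -/
def Omega0 (g h : M2) : ℝ :=
  (-(g 0 1) * (starRingEnd ℂ) (h 0 1) / (g 0 0 * h 0 0)).im

/-- for every `s ≥ 0`, with `W₁ = ψ2(−√s)`, `W₂ = W₁ ψ3(−√s)`,
`W₃ = W₂ ψ2(√s)`, the exact identity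
`Ω_0(W₁,ψ3(−√s)) + Ω_0(W₂,ψ2(√s)) + Ω_0(W₃,ψ3(√s)) = 2s` holds, so in the contracted case
`y = 0` the central component of the group commutator is exactly `2s`. -/
theorem statement17 (s : ℝ) (hs : 0 ≤ s) :
    Omega0 (psi2 (-Real.sqrt s)) (psi3 (-Real.sqrt s))
      + Omega0 (psi2 (-Real.sqrt s) * psi3 (-Real.sqrt s)) (psi2 (Real.sqrt s))
      + Omega0 (psi2 (-Real.sqrt s) * psi3 (-Real.sqrt s) * psi2 (Real.sqrt s))
          (psi3 (Real.sqrt s)) = 2 * s := by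
  simp only [Omega0, psi2, psi3, Matrix.mul_apply, Fin.sum_univ_two, Matrix.of_apply,
    Matrix.cons_val', Matrix.cons_val_zero, Matrix.cons_val_one, Matrix.head_cons,
    Matrix.empty_val', Matrix.cons_val_fin_one, Matrix.head_fin_const]
  simp only [_root_.map_one, _root_.map_mul, Complex.conj_I, Complex.conj_ofReal, _root_.map_neg]
  simp [Complex.ext_iff]
  nlinarith [Real.mul_self_sqrt hs]
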